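/- Let d, w₁, w₂ be positive integers, ξ a root of unity, χ a Dirichlet character mod d, and B_{n,χ,ξ} = B_{n,χ,ξ}(0) the generalized twisted Bernoulli numbers. Then for every n ≥ 0: ∑_{j=0}^{n} C(n,j) w₂^{j+1} w₁^{n−j} B_{n−j,χ,ξ^{w₁}} T_{j,χ,ξ^{w₂}}(w₁d−1) = ∑_{j=0}^{n} C(n,j) w₁^{j+1} w₂^{n−j} B_{n−j,χ,ξ^{w₂}} T_{j,χ,ξ^{w₁}}(w₂d−1) (the identity of equation (2.8) after clearing denominators by w₁w₂). -/

import Mathlib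

/-- `e^{at}` as a formal power series over `ℂ`. -/
noncomputable def expS (a : ℂ) : PowerSeries ℂ :=
  PowerSeries.mk fun n => a ^ n / n.factorial

open PowerSeries Finset

lemma expS_eq (a : ℂ) : expS a = rescale a (PowerSeries.exp ℂ) := by
  ext n
  simp [expS, coeff_rescale, PowerSeries.coeff_exp, map_div₀, div_eq_mul_inv]

lemma expS_mul (a b : ℂ) : expS a * expS b = expS (a + b) := by
  simp [expS_eq, PowerSeries.exp_mul_exp_eq_exp_add]

lemma rescale_expS (c a : ℂ) : rescale c (expS a) = expS (c * a) := by
  ext n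
  simp [expS, coeff_rescale, mul_pow, mul_div_assoc]

lemma expS_zero : expS 0 = 1 := by
  ext n
  cases n <;> simp [expS, PowerSeries.coeff_one]

lemma expS_pow (a : ℂ) (k : ℕ) : (expS a) ^ k = expS (k * a) := by
  induction k with
  | zero => simp [expS_zero]
  | succ k ih => rw [pow_succ, ih, expS_mul]; push_cast; ring_nf

lemma rescale_X (c : ℂ) : rescale c (PowerSeries.X : PowerSeries ℂ) = PowerSeries.C c * PowerSeries.X := by
  ext n
  simp [coeff_rescale, PowerSeries.coeff_X, PowerSeries.coeff_C_mul]

-- geometric splitting of the big sum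
lemma G_split (d w v : ℕ) (ξ : ℂ) (χ : DirichletCharacter ℂ d) :
    (∑ l ∈ Finset.range (w * d), PowerSeries.C (χ (l : ZMod d) * (ξ ^ v) ^ l) * expS (v * l)) =
      (∑ i ∈ Finset.range w, (PowerSeries.C (ξ ^ (v * d)) * expS (v * d)) ^ i) *
        ∑ a ∈ Finset.range d, PowerSeries.C (χ (a : ZMod d) * (ξ ^ v) ^ a) * expS (v * a) := by
  induction w with
  | zero => simp
  | succ w ih =>
    rw [Nat.succ_mul, Finset.sum_range_add, ih, Finset.sum_range_succ, add_mul]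
    congr 1
    rw [Finset.mul_sum]
    refine Finset.sum_congr rfl fun a ha => ?_
    have hχ : χ (((w * d + a : ℕ) : ZMod d)) = χ ((a : ZMod d)) := by
      push_cast
      simp [ZMod.natCast_self]
    rw [hχ]
    have h1 : ((PowerSeries.C (ξ ^ (v * d)) * expS (↑v * ↑d)) ^ w) =
        PowerSeries.C (ξ ^ (v * d * w)) * expS (↑v * ↑d * w) := by
      rw [mul_pow, ← map_pow, ← pow_mul, expS_pow]
      ring_nf
    rw [h1]
    have h2 : (ξ ^ v) ^ (w * d + a) = ξ ^ (v * d * w) * (ξ ^ v) ^ a := by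
      rw [pow_add, ← pow_mul, ← pow_mul]
      ring_nf
    have h3 : (↑v * ((w : ℂ) * d + a)) = (↑v * ↑d * w) + ↑v * ↑a := by ring
    push_cast
    rw [h2, h3, ← expS_mul]
    simp only [map_mul]
    ring

lemma rescale_C' (c x : ℂ) : rescale c (PowerSeries.C x) = PowerSeries.C x := by
  ext n
  cases n <;> simp [coeff_rescale]

lemma side (d w v : ℕ) (ξ : ℂ) (χ : DirichletCharacter ℂ d) (b : ℕ → ℂ)
    (hb : (PowerSeries.mk fun n => b n / n.factorial) *
          (PowerSeries.C ((ξ ^ w) ^ d) * expS d - 1) =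
        PowerSeries.X *
          ∑ a ∈ Finset.range d, PowerSeries.C (χ (a : ZMod d) * (ξ ^ w) ^ a) * expS a) :
    (PowerSeries.C (v : ℂ) * rescale (w : ℂ) (PowerSeries.mk fun n => b n / n.factorial) *
        ∑ l ∈ Finset.range (w * d), PowerSeries.C (χ (l : ZMod d) * (ξ ^ v) ^ l) * expS (v * l)) *
      ((PowerSeries.C (ξ ^ (w * d)) * expS ((w : ℂ) * d) - 1) *
       (PowerSeries.C (ξ ^ (v * d)) * expS ((v : ℂ) * d) - 1)) =
    PowerSeries.C (w : ℂ) * PowerSeries.C (v : ℂ) * PowerSeries.X *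
      (∑ a ∈ Finset.range d, PowerSeries.C (χ (a : ZMod d) * (ξ ^ w) ^ a) * expS ((w : ℂ) * a)) *
      (∑ a ∈ Finset.range d, PowerSeries.C (χ (a : ZMod d) * (ξ ^ v) ^ a) * expS ((v : ℂ) * a)) *
      (PowerSeries.C (ξ ^ (w * v * d)) * expS ((w : ℂ) * v * d) - 1) := by
  have hb' := congrArg (rescale (w : ℂ)) hb
  simp only [map_mul, map_sub, map_one, rescale_C', rescale_X, rescale_expS, map_sum] at hb'
  have hDw : (ξ ^ w) ^ d = ξ ^ (w * d) := by rw [← pow_mul]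
  rw [hDw] at hb'
  -- geometric part
  have hgeom : (∑ l ∈ Finset.range (w * d), PowerSeries.C (χ (l : ZMod d) * (ξ ^ v) ^ l) * expS (v * l)) *
      (PowerSeries.C (ξ ^ (v * d)) * expS ((v : ℂ) * d) - 1) =
      (∑ a ∈ Finset.range d, PowerSeries.C (χ (a : ZMod d) * (ξ ^ v) ^ a) * expS ((v : ℂ) * a)) *
      (PowerSeries.C (ξ ^ (w * v * d)) * expS ((w : ℂ) * v * d) - 1) := by
    rw [G_split d w v ξ χ, mul_assoc, mul_comm (∑ a ∈ Finset.range d, _) _, ← mul_assoc,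
      geom_sum_mul, mul_pow, ← map_pow, ← pow_mul, expS_pow]
    have e1 : v * d * w = w * v * d := by ring
    have e2 : (w : ℂ) * ((v : ℂ) * d) = (w : ℂ) * v * d := by ring
    rw [e1, e2]
    ring
  calc (PowerSeries.C (v : ℂ) * rescale (w : ℂ) (PowerSeries.mk fun n => b n / n.factorial) *
        ∑ l ∈ Finset.range (w * d), PowerSeries.C (χ (l : ZMod d) * (ξ ^ v) ^ l) * expS (v * l)) *
      ((PowerSeries.C (ξ ^ (w * d)) * expS ((w : ℂ) * d) - 1) *
       (PowerSeries.C (ξ ^ (v * d)) * expS ((v : ℂ) * d) - 1))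
      = PowerSeries.C (v : ℂ) *
        ((rescale (w : ℂ) (PowerSeries.mk fun n => b n / n.factorial)) *
          (PowerSeries.C (ξ ^ (w * d)) * expS ((w : ℂ) * d) - 1)) *
        ((∑ l ∈ Finset.range (w * d), PowerSeries.C (χ (l : ZMod d) * (ξ ^ v) ^ l) * expS (v * l)) *
          (PowerSeries.C (ξ ^ (v * d)) * expS ((v : ℂ) * d) - 1)) := by ring
    _ = _ := by rw [hb', hgeom]; simp only [map_mul]; ring

lemma D_ne (w d : ℕ) (hw : 0 < w) (hd : 0 < d) (ξ : ℂ) (hξ : ξ ≠ 0) :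
    PowerSeries.C (ξ ^ (w * d)) * expS ((w : ℂ) * d) - 1 ≠ 0 := by
  intro h
  have h1 := congrArg (PowerSeries.coeff 1) h
  rw [map_sub, PowerSeries.coeff_C_mul] at h1
  simp [expS, PowerSeries.coeff_one] at h1
  rcases h1 with ⟨h, -⟩ | h | h
  · exact hξ h
  · exact hw.ne' h
  · exact hd.ne' h

lemma extract (d w v : ℕ) (ξ : ℂ) (χ : DirichletCharacter ℂ d) (b : ℕ → ℂ) (n : ℕ) :
    ∑ j ∈ Finset.range (n + 1), (n.choose j : ℂ) * (v : ℂ) ^ (j + 1) * (w : ℂ) ^ (n - j) *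
        b (n - j) * (∑ l ∈ Finset.range (w * d), χ (l : ZMod d) * (ξ ^ v) ^ l * (l : ℂ) ^ j) =
    (n.factorial : ℂ) * PowerSeries.coeff n
      (PowerSeries.C (v : ℂ) * rescale (w : ℂ) (PowerSeries.mk fun m => b m / m.factorial) *
        ∑ l ∈ Finset.range (w * d), PowerSeries.C (χ (l : ZMod d) * (ξ ^ v) ^ l) * expS (v * l)) := by
  rw [mul_assoc, PowerSeries.coeff_C_mul, PowerSeries.coeff_mul,
    Finset.Nat.sum_antidiagonal_eq_sum_range_succ_mk]
  rw [← Finset.sum_range_reflect]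
  rw [Finset.mul_sum, Finset.mul_sum]
  refine Finset.sum_congr rfl fun k hk => ?_
  have hk' : k ≤ n := Nat.lt_succ_iff.mp (Finset.mem_range.mp hk)
  have e1 : n + 1 - 1 - k = n - k := by omega
  have e2 : n - (n - k) = k := Nat.sub_sub_self hk'
  have e3 : n.choose (n - k) = n.choose k := Nat.choose_symm hk'
  rw [e1, e2, e3]
  rw [PowerSeries.coeff_rescale, PowerSeries.coeff_mk, map_sum]
  have hcoe : ∀ l : ℕ, PowerSeries.coeff (n - k)
      (PowerSeries.C (χ (l : ZMod d) * (ξ ^ v) ^ l) * expS (v * l)) =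
      χ (l : ZMod d) * (ξ ^ v) ^ l * ((v : ℂ) ^ (n - k) / (n - k).factorial * (l : ℂ) ^ (n - k)) := by
    intro l
    rw [PowerSeries.coeff_C_mul]
    unfold expS
    rw [PowerSeries.coeff_mk, mul_pow]
    ring
  simp only [hcoe]
  have harr : (∑ l ∈ Finset.range (w * d), χ (l : ZMod d) * (ξ ^ v) ^ l *
      ((v : ℂ) ^ (n - k) / (n - k).factorial * (l : ℂ) ^ (n - k))) =
      ((v : ℂ) ^ (n - k) / (n - k).factorial) *
      ∑ l ∈ Finset.range (w * d), χ (l : ZMod d) * (ξ ^ v) ^ l * (l : ℂ) ^ (n - k) := by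
    rw [Finset.mul_sum]
    exact Finset.sum_congr rfl fun l _ => by ring
  rw [harr]
  have hch : (n.choose k : ℂ) = (n.factorial : ℂ) / (k.factorial * (n - k).factorial) :=
    Nat.cast_choose ℂ hk'
  have hkf : (k.factorial : ℂ) ≠ 0 := Nat.cast_ne_zero.mpr k.factorial_ne_zero
  have hnkf : ((n - k).factorial : ℂ) ≠ 0 := Nat.cast_ne_zero.mpr (n - k).factorial_ne_zero
  rw [hch]
  field_simp
  ring

/-- Symmetry identity (2.8) for the generalized twisted Bernoulli *numbers*, with both
sides multiplied by `w₁w₂`. `b1`, `b2` are the generalized twisted Bernoulli numbers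
attached to `χ` with twists `ξ^{w₁}` and `ξ^{w₂}` respectively. -/
theorem generalized_twisted_bernoulli_numbers_symmetry
    (d w₁ w₂ : ℕ) (hd : 0 < d) (hw₁ : 0 < w₁) (hw₂ : 0 < w₂)
    (ξ : ℂ) (hξ : ∃ m : ℕ, 0 < m ∧ ξ ^ m = 1)
    (χ : DirichletCharacter ℂ d) (b1 b2 : ℕ → ℂ)
    (hb1 : (PowerSeries.mk fun n => b1 n / n.factorial) *
          (PowerSeries.C ((ξ ^ w₁) ^ d) * expS d - 1) =
        PowerSeries.X *
          ∑ a ∈ Finset.range d, PowerSeries.C (χ (a : ZMod d) * (ξ ^ w₁) ^ a) * expS a)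
    (hb2 : (PowerSeries.mk fun n => b2 n / n.factorial) *
          (PowerSeries.C ((ξ ^ w₂) ^ d) * expS d - 1) =
        PowerSeries.X *
          ∑ a ∈ Finset.range d, PowerSeries.C (χ (a : ZMod d) * (ξ ^ w₂) ^ a) * expS a)
    (n : ℕ) :
    ∑ j ∈ Finset.range (n + 1), (n.choose j : ℂ) * (w₂ : ℂ) ^ (j + 1) * (w₁ : ℂ) ^ (n - j) *
        b1 (n - j) *
        (∑ l ∈ Finset.range (w₁ * d), χ (l : ZMod d) * (ξ ^ w₂) ^ l * (l : ℂ) ^ j) =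
      ∑ j ∈ Finset.range (n + 1), (n.choose j : ℂ) * (w₁ : ℂ) ^ (j + 1) * (w₂ : ℂ) ^ (n - j) *
        b2 (n - j) *
        (∑ l ∈ Finset.range (w₂ * d), χ (l : ZMod d) * (ξ ^ w₁) ^ l * (l : ℂ) ^ j) := by
  have hξ0 : ξ ≠ 0 := by
    obtain ⟨m, hm, hmeq⟩ := hξ
    intro h
    rw [h, zero_pow hm.ne'] at hmeq
    exact zero_ne_one hmeq
  have key : (PowerSeries.C (w₂ : ℂ) * rescale (w₁ : ℂ) (PowerSeries.mk fun m => b1 m / m.factorial) *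
        ∑ l ∈ Finset.range (w₁ * d), PowerSeries.C (χ (l : ZMod d) * (ξ ^ w₂) ^ l) * expS (w₂ * l)) =
      (PowerSeries.C (w₁ : ℂ) * rescale (w₂ : ℂ) (PowerSeries.mk fun m => b2 m / m.factorial) *
        ∑ l ∈ Finset.range (w₂ * d), PowerSeries.C (χ (l : ZMod d) * (ξ ^ w₁) ^ l) * expS (w₁ * l)) := by
    have h1 := side d w₁ w₂ ξ χ b1 hb1
    have h2 := side d w₂ w₁ ξ χ b2 hb2
    have hDD : (PowerSeries.C (ξ ^ (w₁ * d)) * expS ((w₁ : ℂ) * d) - 1) *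
        (PowerSeries.C (ξ ^ (w₂ * d)) * expS ((w₂ : ℂ) * d) - 1) ≠ 0 :=
      mul_ne_zero (D_ne w₁ d hw₁ hd ξ hξ0) (D_ne w₂ d hw₂ hd ξ hξ0)
    apply mul_right_cancel₀ hDD
    rw [h1, mul_comm (PowerSeries.C (ξ ^ (w₁ * d)) * expS ((w₁ : ℂ) * d) - 1)
      (PowerSeries.C (ξ ^ (w₂ * d)) * expS ((w₂ : ℂ) * d) - 1), h2]
    have e : w₂ * w₁ * d = w₁ * w₂ * d := by ring
    have e2 : (w₂ : ℂ) * w₁ * d = (w₁ : ℂ) * w₂ * d := by ring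
    rw [e, e2]
    ring
  rw [extract d w₁ w₂ ξ χ b1 n, extract d w₂ w₁ ξ χ b2 n, key]
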